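/- arXiv:1801.00507 — 4 statements merged into one kernel-verified Lean document; each statement's English description precedes it below -/
import Mathlib

section
/- Let (X, dist) be a pseudometric space, ε > 0, and x_0, …, x_n points of X. Let S be the greedy ε-net index set of x_0, …, x_n, and for δ > 0 let N(δ) denote the minimal cardinality of a subset C ⊆ {x_0, …, x_n} such that every x_t satisfies dist(x_t, c) ≤ δ for some c ∈ C. Then N(ε) ≤ |S| ≤ N(ε/2). -/
/-- The greedy `ε`-net index set of the points `x 0, x 1, …`:
`0` belongs to it, and `t ≥ 1` belongs to it iff `dist (x t) (x s) > ε`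
for every earlier member `s` of the set. -/
def greedyNet {X : Type*} [PseudoMetricSpace X] (x : ℕ → X) (ε : ℝ) : ℕ → Prop
  | t => t = 0 ∨ ∀ s, (h : s < t) → greedyNet x ε s → ε < dist (x t) (x s)

/-- The internal `δ`-covering number of the finite family `x 0, …, x n`:
the minimal cardinality of a set of indices `C ⊆ {0, …, n}` such that every
`x t`, `t ≤ n`, is within distance `δ` of some `x s`, `s ∈ C`. -/
noncomputable def internalCoveringNumber
    {X : Type*} [PseudoMetricSpace X] (x : ℕ → X) (n : ℕ) (δ : ℝ) : ℕ :=
  sInf {k : ℕ | ∃ C : Finset ℕ, (∀ s ∈ C, s ≤ n) ∧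
    (∀ t ≤ n, ∃ s ∈ C, dist (x t) (x s) ≤ δ) ∧ C.card = k}

/-!
The greedy net is an `ε`-cover of the points, since a point left out of it lies within `ε` of an
earlier member, so `N(ε) ≤ |S|`. Its members are pairwise more than `ε` apart, so by the triangle
inequality no `ε/2`-ball contains two of them; choosing a center of an `ε/2`-cover for each member
is therefore injective, which gives `|S| ≤ N(ε/2)`.
-/

section CoveringNumber

variable {X : Type*} [PseudoMetricSpace X] (x : ℕ → X) {n : ℕ} {δ : ℝ}

theorem internalCoveringNumber_le_ncard {S : Set ℕ} (hSn : ∀ s ∈ S, s ≤ n)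
    (hcov : ∀ t ≤ n, ∃ s ∈ S, dist (x t) (x s) ≤ δ) :
    internalCoveringNumber x n δ ≤ S.ncard := by
  have hfin : S.Finite := (Set.finite_Iic n).subset hSn
  exact Nat.sInf_le ⟨hfin.toFinset, by simpa using hSn, by simpa using hcov,
    (Set.ncard_eq_toFinset_card S hfin).symm⟩

theorem ncard_le_internalCoveringNumber (hδ : 0 ≤ δ) {S : Set ℕ} (hSn : ∀ s ∈ S, s ≤ n)
    (hS : S.Pairwise fun s t => δ + δ < dist (x s) (x t)) :
    S.ncard ≤ internalCoveringNumber x n δ := by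
  have hfin : S.Finite := (Set.finite_Iic n).subset hSn
  have hcovers_nonempty : {k : ℕ | ∃ C : Finset ℕ, (∀ s ∈ C, s ≤ n) ∧
      (∀ t ≤ n, ∃ s ∈ C, dist (x t) (x s) ≤ δ) ∧ C.card = k}.Nonempty :=
    ⟨_, Finset.range (n + 1), by simp,
      fun t ht => ⟨t, by simpa [Nat.lt_succ_iff] using ht, by simpa using hδ⟩, rfl⟩
  refine le_csInf hcovers_nonempty ?_
  rintro _ ⟨C, -, hcov, rfl⟩
  rw [Set.ncard_eq_toFinset_card S hfin]
  refine Finset.card_le_card_of_forall_subsingleton (fun t c => dist (x t) (x c) ≤ δ)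
    (fun t ht => hcov t (hSn t (by simpa using ht))) ?_
  rintro c - s ⟨hs, hsc⟩ t ⟨ht, htc⟩
  by_contra hst
  have hsep := hS (by simpa using hs) (by simpa using ht) hst
  linarith [dist_triangle_right (x s) (x t) (x c)]

end CoveringNumber

section GreedyNet

variable {X : Type*} [PseudoMetricSpace X] (x : ℕ → X) {ε : ℝ}

theorem exists_greedyNet_le_dist_le (hε : 0 ≤ ε) (t : ℕ) :
    ∃ s ≤ t, greedyNet x ε s ∧ dist (x t) (x s) ≤ ε := by
  by_cases ht : greedyNet x ε t
  · exact ⟨t, le_rfl, ht, by simpa using hε⟩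
  · rw [greedyNet] at ht
    push Not at ht
    obtain ⟨-, s, hst, hs, hd⟩ := ht
    exact ⟨s, hst.le, hs, hd⟩

theorem greedyNet_pairwise_lt_dist (ε : ℝ) :
    {t | greedyNet x ε t}.Pairwise fun s t => ε < dist (x s) (x t) := by
  have lt_dist_of_lt : ∀ {s t}, s < t → greedyNet x ε s → greedyNet x ε t →
      ε < dist (x s) (x t) := by
    intro s t hst hs ht
    rw [greedyNet] at ht
    rcases ht with rfl | ht
    · omega
    · exact dist_comm (x s) (x t) ▸ ht s hst hs
  intro s hs t ht hne
  rcases hne.lt_or_gt with h | h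
  · exact lt_dist_of_lt h hs ht
  · exact dist_comm (x s) (x t) ▸ lt_dist_of_lt h ht hs

end GreedyNet

theorem coveringNumber_le_greedyNet_card_le_coveringNumber
    {X : Type*} [PseudoMetricSpace X] (x : ℕ → X) (ε : ℝ) (hε : 0 < ε) (n : ℕ) :
    internalCoveringNumber x n ε ≤ {t : ℕ | t ≤ n ∧ greedyNet x ε t}.ncard ∧
    {t : ℕ | t ≤ n ∧ greedyNet x ε t}.ncard ≤ internalCoveringNumber x n (ε / 2) := by
  have hnet : ∀ s ∈ {t : ℕ | t ≤ n ∧ greedyNet x ε t}, s ≤ n := fun s hs => hs.1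
  constructor
  · refine internalCoveringNumber_le_ncard x hnet fun t ht => ?_
    obtain ⟨s, hst, hs, hd⟩ := exists_greedyNet_le_dist_le x hε.le t
    exact ⟨s, ⟨hst.trans ht, hs⟩, hd⟩
  · refine ncard_le_internalCoveringNumber x (half_pos hε).le hnet ?_
    rw [add_halves]
    exact (greedyNet_pairwise_lt_dist x ε).mono fun _ h => h.2
end

section
/- Let (X, dist) be a pseudometric space, let ε_0 ≥ ε_1 ≥ … ≥ ε_n > 0 be a nonincreasing sequence, and let x_0, …, x_n be points of X. Define S ⊆ {0, …, n} recursively by: 0 ∈ S, and for t ≥ 1, t ∈ S if and only if dist(x_t, x_s) > ε_t for every s ∈ S with s < t. Then the points {x_s : s ∈ S} are pairwise ε_n-separated, and consequently |S| ≤ N(ε_n/2), where N(δ) is the minimal cardinality of a subset C ⊆ {x_0, …, x_n} such that every x_t is within distance δ of some element of C. -/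
/-- The greedy net index set with a varying threshold sequence `ε t`:
`0` belongs to it, and `t ≥ 1` belongs to it iff `dist (x t) (x s) > ε t`
for every earlier member `s` of the set. -/
def greedyNetVar {X : Type*} [PseudoMetricSpace X] (x : ℕ → X) (ε : ℕ → ℝ) : ℕ → Prop
  | t => t = 0 ∨ ∀ s, (h : s < t) → greedyNetVar x ε s → ε t < dist (x t) (x s)

theorem greedyNetVar_separated_and_card_le
    {X : Type*} [PseudoMetricSpace X] (x : ℕ → X) (n : ℕ) (ε : ℕ → ℝ)
    (hmono : ∀ i ≤ n, ∀ j ≤ n, i ≤ j → ε j ≤ ε i) (hpos : 0 < ε n) :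
    (∀ s ≤ n, ∀ s' ≤ n, greedyNetVar x ε s → greedyNetVar x ε s' → s ≠ s' →
      ε n < dist (x s) (x s')) ∧
    {t : ℕ | t ≤ n ∧ greedyNetVar x ε t}.ncard ≤ internalCoveringNumber x n (ε n / 2) := by
  -- separation for ordered pairs
  have sep : ∀ s s', s < s' → s' ≤ n → greedyNetVar x ε s → greedyNetVar x ε s' →
      ε n < dist (x s) (x s') := by
    intro s s' hlt hs'n hs hs'
    rw [greedyNetVar] at hs'
    rcases hs' with h0 | hall
    · omega
    · have h := hall s hlt hs
      have hεn : ε n ≤ ε s' := hmono s' hs'n n le_rfl hs'n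
      rw [dist_comm]
      linarith
  have sep' : ∀ s ≤ n, ∀ s' ≤ n, greedyNetVar x ε s → greedyNetVar x ε s' → s ≠ s' →
      ε n < dist (x s) (x s') := by
    intro s hsn s' hs'n hs hs' hne
    rcases lt_trichotomy s s' with h | h | h
    · exact sep s s' h hs'n hs hs'
    · exact absurd h hne
    · rw [dist_comm]; exact sep s' s h hsn hs' hs
  refine ⟨sep', ?_⟩
  -- the set of indices in the covering-number Inf is nonempty
  have hmem : internalCoveringNumber x n (ε n / 2) ∈
      {k : ℕ | ∃ C : Finset ℕ, (∀ s ∈ C, s ≤ n) ∧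
        (∀ t ≤ n, ∃ s ∈ C, dist (x t) (x s) ≤ ε n / 2) ∧ C.card = k} := by
    apply Nat.sInf_mem
    refine ⟨(Finset.Iic n).card, Finset.Iic n, ?_, ?_, rfl⟩
    · intro s hs; exact Finset.mem_Iic.mp hs
    · intro t ht
      exact ⟨t, Finset.mem_Iic.mpr ht, by simp; linarith⟩
  obtain ⟨C, hCn, hCcov, hCcard⟩ := hmem
  -- map each element of the greedy set to a covering index
  classical
  set S : Set ℕ := {t : ℕ | t ≤ n ∧ greedyNetVar x ε t} with hS
  have hchoice : ∀ t ∈ S, ∃ s ∈ C, dist (x t) (x s) ≤ ε n / 2 := fun t ht => hCcov t ht.1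
  choose f hfC hfd using hchoice
  have key : S.ncard ≤ (↑C : Set ℕ).ncard := by
    apply Set.ncard_le_ncard_of_injOn (fun t => if h : t ∈ S then f t h else 0)
    · intro a ha; simp only [dif_pos ha]; exact hfC a ha
    · intro a ha b hb hab
      simp only [dif_pos ha, dif_pos hb] at hab
      by_contra hne
      have h1 := hfd a ha
      have h2 := hfd b hb
      rw [hab] at h1
      have := sep' a ha.1 b hb.1 ha.2 hb.2 hne
      have htri : dist (x a) (x b) ≤ dist (x a) (x (f b hb)) + dist (x (f b hb)) (x b) :=
        dist_triangle _ _ _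
      rw [dist_comm (x (f b hb))] at htri
      linarith

  rw [Set.ncard_coe_finset] at key
  omega
end

section
/- Let H be a nonempty convex subset of a real vector space and let R : H → [0,1] be convex. For i = 1, …, s let R_i : H → [0,1], ℓ_i : H → [0,1], h_i ∈ H, and ε_i ≥ 0 be such that |R(h) − R_i(h)| ≤ 2ε_i for all h ∈ H. Let h̄ = (1/s) Σ_{i=1}^s h_i and let W = Σ_{i=1}^s ℓ_i(h_i) − inf_{h∈H} Σ_{i=1}^s ℓ_i(h) be the regret. Then R(h̄) − inf_{h∈H} R(h) ≤ (4/s) Σ_{i=1}^s ε_i + W/s + (1/s) Σ_{i=1}^s (R_i(h_i) − ℓ_i(h_i)) + sup_{h∈H} (1/s) Σ_{i=1}^s (ℓ_i(h) − R_i(h)). -/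
open Finset

/-!
By Jensen's inequality `s R(h̄) ≤ ∑ R(h_i)`, and the discrepancies bound this by
`∑ R_i(h_i) + 2∑ ε_i`. On the other side, every comparator `x ∈ H` satisfies
`∑ ℓ_i(x) ≤ ∑ R_i(x) + sup ∑ (ℓ_i - R_i) ≤ s R(x) + 2∑ ε_i + sup ∑ (ℓ_i - R_i)`, so passing to
infima `inf ∑ ℓ_i ≤ s inf R + 2∑ ε_i + sup ∑ (ℓ_i - R_i)`. Subtracting, the excess risk times `s`
is at most `4∑ ε_i`, plus the regret `∑ ℓ_i(h_i) - inf ∑ ℓ_i`, plus the two deviation terms.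
-/

theorem ConvexOn.map_uniform_average_le {V ι : Type*} [AddCommGroup V] [Module ℝ V] [Fintype ι]
    [Nonempty ι] {H : Set V} {f : V → ℝ} (hf : ConvexOn ℝ H f) {p : ι → V} (hp : ∀ i, p i ∈ H) :
    f ((Fintype.card ι : ℝ)⁻¹ • ∑ i, p i) ≤ (Fintype.card ι : ℝ)⁻¹ * ∑ i, f (p i) := by
  have hcard : (Fintype.card ι : ℝ) ≠ 0 := by positivity
  have hjensen := hf.map_sum_le (t := univ) (w := fun _ => (Fintype.card ι : ℝ)⁻¹)
    (fun _ _ => by positivity) (by simp [hcard]) (fun i _ => hp i)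
  simpa only [← smul_sum, ← mul_sum, smul_eq_mul] using hjensen

theorem abs_sum_sub_sum_le {ι : Type*} (t : Finset ι) {a b ε : ι → ℝ}
    (h : ∀ i ∈ t, |a i - b i| ≤ ε i) : |∑ i ∈ t, a i - ∑ i ∈ t, b i| ≤ ∑ i ∈ t, ε i := by
  rw [← sum_sub_distrib]
  exact (abs_sum_le_sum_abs _ _).trans (sum_le_sum h)

theorem ciInf_le_mul_ciInf_add {ι : Type*} [Nonempty ι] {f g : ι → ℝ}
    (hg : BddBelow (Set.range g)) {a c : ℝ} (ha : 0 < a) (h : ∀ i, g i ≤ a * f i + c) :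
    ⨅ i, g i ≤ a * (⨅ i, f i) + c := by
  have hlower : ∀ i, ((⨅ i, g i) - c) / a ≤ f i := fun i => by
    rw [div_le_iff₀' ha]
    linarith [ciInf_le hg i, h i]
  have hinf : ((⨅ i, g i) - c) / a ≤ ⨅ i, f i := le_ciInf hlower
  rw [div_le_iff₀' ha] at hinf
  linarith

theorem card_mul_map_uniform_average_le {V ι : Type*} [AddCommGroup V] [Module ℝ V] [Fintype ι]
    [Nonempty ι] {H : Set V} {R : V → ℝ} {Ri : ι → V → ℝ} {ε : ι → ℝ} (hR : ConvexOn ℝ H R)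
    {p : ι → V} (hp : ∀ i, p i ∈ H) (hdisc : ∀ i, ∀ x ∈ H, |R x - Ri i x| ≤ ε i) :
    Fintype.card ι * R ((Fintype.card ι : ℝ)⁻¹ • ∑ i, p i) ≤ ∑ i, Ri i (p i) + ∑ i, ε i := by
  have hjensen := hR.map_uniform_average_le hp
  rw [inv_mul_eq_div, le_div_iff₀' (by positivity)] at hjensen
  have hsum := abs_sum_sub_sum_le univ fun i _ => hdisc i (p i) (hp i)
  linarith [(abs_le.mp hsum).2]

theorem ciInf_sum_le_card_mul_ciInf_add_ciSup {V ι : Type*} [Fintype ι] [Nonempty ι] {H : Set V}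
    [Nonempty H] {R : V → ℝ} {Ri li : ι → V → ℝ} {ε : ι → ℝ}
    (hli : ∀ i, ∀ x ∈ H, li i x ∈ Set.Icc (0 : ℝ) 1) (hRi : ∀ i, ∀ x ∈ H, 0 ≤ Ri i x)
    (hdisc : ∀ i, ∀ x ∈ H, |R x - Ri i x| ≤ ε i) :
    ⨅ x : H, ∑ i, li i x ≤
      Fintype.card ι * (⨅ x : H, R x) + (∑ i, ε i + ⨆ x : H, ∑ i, (li i x - Ri i x)) := by
  have hgap_bdd : BddAbove (Set.range fun x : H => ∑ i, (li i x - Ri i x)) := by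
    refine ⟨Fintype.card ι, Set.forall_mem_range.2 fun x => ?_⟩
    calc ∑ i, (li i x - Ri i x) ≤ ∑ _i : ι, (1 : ℝ) :=
          sum_le_sum fun i _ => by linarith [(hli i x x.2).2, hRi i x x.2]
      _ = Fintype.card ι := by simp
  refine ciInf_le_mul_ciInf_add ⟨0, Set.forall_mem_range.2 fun x => ?_⟩ (by positivity)
    fun x => ?_
  · exact sum_nonneg fun i _ => (hli i x x.2).1
  · have hgap := le_ciSup hgap_bdd x
    have hsum := abs_sum_sub_sum_le univ fun i _ => hdisc i x x.2
    rw [sum_sub_distrib] at hgap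
    simp only [sum_const, card_univ, nsmul_eq_mul] at hsum
    linarith [(abs_le.mp hsum).1]

theorem macro_convex_online_bound_general
    {V : Type*} [AddCommGroup V] [Module ℝ V]
    (H : Set V)
    (R : V → ℝ) (hRconv : ConvexOn ℝ H R)
    (s : ℕ) (hs : 1 ≤ s)
    (Ri li : Fin s → V → ℝ)
    (hRi01 : ∀ i, ∀ h ∈ H, Ri i h ∈ Set.Icc (0 : ℝ) 1)
    (hli01 : ∀ i, ∀ h ∈ H, li i h ∈ Set.Icc (0 : ℝ) 1)
    (h : Fin s → V) (hh : ∀ i, h i ∈ H)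
    (ε : Fin s → ℝ)
    (hdisc : ∀ i, ∀ x ∈ H, |R x - Ri i x| ≤ 2 * ε i) :
    R ((s : ℝ)⁻¹ • ∑ i, h i) - ⨅ x : H, R x ≤
      (4 / (s : ℝ)) * ∑ i, ε i
      + (∑ i, li i (h i) - ⨅ x : H, ∑ i, li i x) / (s : ℝ)
      + (1 / (s : ℝ)) * ∑ i, (Ri i (h i) - li i (h i))
      + ⨆ x : H, (1 / (s : ℝ)) * ∑ i, (li i (x : V) - Ri i (x : V)) := by
  have : NeZero s := ⟨by omega⟩
  have : Nonempty H := ⟨⟨h 0, hh 0⟩⟩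
  have hs0 : (0 : ℝ) < s := by exact_mod_cast hs
  have hiterates := card_mul_map_uniform_average_le hRconv hh hdisc
  have hcomparator := ciInf_sum_le_card_mul_ciInf_add_ciSup hli01 (fun i x hx => (hRi01 i x hx).1)
    hdisc
  simp only [Fintype.card_fin, ← mul_sum] at hiterates hcomparator
  rw [← Real.mul_iSup_of_nonneg (by positivity), sum_sub_distrib]
  calc R ((s : ℝ)⁻¹ • ∑ i, h i) - ⨅ x : H, R x
      ≤ (4 * ∑ i, ε i + (∑ i, li i (h i) - ⨅ x : H, ∑ i, li i x)
          + (∑ i, Ri i (h i) - ∑ i, li i (h i)) + ⨆ x : H, ∑ i, (li i x - Ri i x)) / s := by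
        rw [le_div_iff₀' hs0]
        linarith
    _ = _ := by ring

/-- Deterministic core of Theorems 2 and 4 (online subroutine with averaging for
online-to-batch conversion, convex loss): the excess risk of the averaged
hypothesis is bounded via the per-step discrepancies `ε i`, the regret `W`, and
the deviations between conditional risks and observed losses. -/
theorem macro_convex_online_bound
    {V : Type*} [AddCommGroup V] [Module ℝ V]
    (H : Set V) (hHconv : Convex ℝ H) (hHne : H.Nonempty)
    (R : V → ℝ) (hRconv : ConvexOn ℝ H R)
    (hR01 : ∀ h ∈ H, R h ∈ Set.Icc (0 : ℝ) 1)
    (s : ℕ) (hs : 1 ≤ s)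
    (Ri li : Fin s → V → ℝ)
    (hRi01 : ∀ i, ∀ h ∈ H, Ri i h ∈ Set.Icc (0 : ℝ) 1)
    (hli01 : ∀ i, ∀ h ∈ H, li i h ∈ Set.Icc (0 : ℝ) 1)
    (h : Fin s → V) (hh : ∀ i, h i ∈ H)
    (ε : Fin s → ℝ) (hε : ∀ i, 0 ≤ ε i)
    (hdisc : ∀ i, ∀ x ∈ H, |R x - Ri i x| ≤ 2 * ε i) :
    R ((s : ℝ)⁻¹ • ∑ i, h i) - ⨅ x : H, R x ≤
      (4 / (s : ℝ)) * ∑ i, ε i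
      + (∑ i, li i (h i) - ⨅ x : H, ∑ i, li i x) / (s : ℝ)
      + (1 / (s : ℝ)) * ∑ i, (Ri i (h i) - li i (h i))
      + ⨆ x : H, (1 / (s : ℝ)) * ∑ i, (li i (x : V) - Ri i (x : V)) :=
  macro_convex_online_bound_general H R hRconv s hs Ri li hRi01 hli01 h hh ε hdisc
end

section
/- Let (Ω, 𝓕, μ) be a probability space equipped with a filtration 𝓕_0 ⊆ 𝓕_1 ⊆ … ⊆ 𝓕_n ⊆ 𝓕. For t = 1, …, n let g_t : Ω → ℝ be 𝓕_t-measurable with |g_t| ≤ 1 almost surely and E[g_t | 𝓕_{t−1}] = 0 almost surely, and let w_t : Ω → {0,1} be 𝓕_{t−1}-measurable. Then for every α > 0 and every integer i ≥ 1, μ({ Σ_{t=1}^n w_t = i } ∩ { |Σ_{t=1}^n w_t g_t| > α i }) ≤ 2 exp(−i α² / 2). -/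
/-!
For `|x| ≤ 1`, convexity of `exp` and `cosh a ≤ exp (a² / 2)` give
`exp (a x - a² / 2) ≤ 1 + c x` with a constant `c` depending only on `a`. Since `w_t ∈ {0, 1}` is
predictable and `E[g_t | 𝓕_{t-1}] = 0`, this makes `exp (∑_{t ≤ m} (α w_t g_t - α² w_t / 2))`
a supermartingale started at `1`. On the event `{∑ w_t = i, ∑ w_t g_t > α i}` its value at `n`
exceeds `exp (α² i / 2)`, so Markov's inequality bounds the probability by `exp (-α² i / 2)`;
the lower tail is the same bound for `-g`.
-/

open MeasureTheory Finset

namespace Real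

lemma exp_mul_le_cosh_add_sinh_mul (a : ℝ) {x : ℝ} (hx : |x| ≤ 1) :
    exp (a * x) ≤ cosh a + sinh a * x := by
  obtain ⟨hx₁, hx₂⟩ := abs_le.1 hx
  have hconv := convexOn_exp.2 (Set.mem_univ (-a)) (Set.mem_univ a)
    (by linarith : (0 : ℝ) ≤ (1 - x) / 2) (by linarith : (0 : ℝ) ≤ (1 + x) / 2) (by ring)
  simp only [smul_eq_mul] at hconv
  calc exp (a * x) = exp ((1 - x) / 2 * -a + (1 + x) / 2 * a) := by ring_nf
    _ ≤ (1 - x) / 2 * exp (-a) + (1 + x) / 2 * exp a := hconv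
    _ = cosh a + sinh a * x := by rw [cosh_eq, sinh_eq]; ring

lemma exp_mul_sub_sq_half_le (a : ℝ) {x : ℝ} (hx : |x| ≤ 1) :
    exp (a * x - a ^ 2 / 2) ≤ 1 + exp (-(a ^ 2 / 2)) * sinh a * x := by
  have hcosh : exp (-(a ^ 2 / 2)) * cosh a ≤ 1 :=
    calc exp (-(a ^ 2 / 2)) * cosh a ≤ exp (-(a ^ 2 / 2)) * exp (a ^ 2 / 2) := by
          gcongr; exact cosh_le_exp_half_sq a
      _ = 1 := by rw [← exp_add]; simp
  calc exp (a * x - a ^ 2 / 2) = exp (-(a ^ 2 / 2)) * exp (a * x) := by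
        rw [← exp_add]; ring_nf
    _ ≤ exp (-(a ^ 2 / 2)) * (cosh a + sinh a * x) := by
        gcongr; exact exp_mul_le_cosh_add_sinh_mul a hx
    _ ≤ 1 + exp (-(a ^ 2 / 2)) * sinh a * x := by linarith

lemma exp_mul_sub_sq_half_mul_le (a : ℝ) {w x : ℝ} (hw : w = 0 ∨ w = 1) (hx : |x| ≤ 1) :
    exp (a * (w * x) - a ^ 2 / 2 * w) ≤ 1 + exp (-(a ^ 2 / 2)) * sinh a * (w * x) := by
  rcases hw with rfl | rfl
  · simp
  · simpa using exp_mul_sub_sq_half_le a hx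

end Real

lemma MeasureTheory.integral_mul_eq_zero_of_condExp_eq_zero {Ω : Type*} {m m0 : MeasurableSpace Ω}
    {μ : Measure Ω} [IsFiniteMeasure μ] (hm : m ≤ m0) {X g : Ω → ℝ}
    (hX : StronglyMeasurable[m] X) (hXg : Integrable (X * g) μ) (hg : Integrable g μ)
    (hg_zero : μ[g|m] =ᵐ[μ] 0) :
    ∫ ω, X ω * g ω ∂μ = 0 := by
  have hcond : μ[X * g|m] =ᵐ[μ] 0 := by
    filter_upwards [condExp_mul_of_stronglyMeasurable_left hX hXg hg, hg_zero] with ω h h₀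
    simp [h, h₀]
  calc ∫ ω, X ω * g ω ∂μ = ∫ ω, (μ[X * g|m]) ω ∂μ := (integral_condExp hm).symm
    _ = 0 := by simp [integral_congr_ae hcond]

/-- `exp (azumaExponent a g w m)` is the exponential supermartingale of the weighted sums. -/
noncomputable def azumaExponent {Ω : Type*} (a : ℝ) (g w : ℕ → Ω → ℝ) (m : ℕ) (ω : Ω) : ℝ :=
  ∑ t ∈ Icc 1 m, (a * (w t ω * g t ω) - a ^ 2 / 2 * w t ω)

lemma azumaExponent_succ {Ω : Type*} {g w : ℕ → Ω → ℝ} (a : ℝ) (m : ℕ) (ω : Ω) :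
    azumaExponent a g w (m + 1) ω =
      azumaExponent a g w m ω + (a * (w (m + 1) ω * g (m + 1) ω) - a ^ 2 / 2 * w (m + 1) ω) :=
  sum_Icc_succ_top (by omega) _

lemma exp_azumaExponent_succ_le {Ω : Type*} {g w : ℕ → Ω → ℝ} (a : ℝ) (m : ℕ) {ω : Ω}
    (hw : w (m + 1) ω = 0 ∨ w (m + 1) ω = 1) (hg : |g (m + 1) ω| ≤ 1) :
    Real.exp (azumaExponent a g w (m + 1) ω) ≤
      Real.exp (azumaExponent a g w m ω) + Real.exp (-(a ^ 2 / 2)) * Real.sinh a *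
        (Real.exp (azumaExponent a g w m ω) * w (m + 1) ω * g (m + 1) ω) := by
  rw [azumaExponent_succ, Real.exp_add]
  calc _ ≤ Real.exp (azumaExponent a g w m ω) *
        (1 + Real.exp (-(a ^ 2 / 2)) * Real.sinh a * (w (m + 1) ω * g (m + 1) ω)) := by
        gcongr
        exact Real.exp_mul_sub_sq_half_mul_le a hw hg
    _ = _ := by ring

section WeightedAzuma

variable {Ω : Type*} [m0 : MeasurableSpace Ω]

structure IsBoundedMartingaleDiff (μ : Measure Ω) (ℱ : Filtration ℕ m0) (n : ℕ)
    (g : ℕ → Ω → ℝ) : Prop where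
  measurable : ∀ t ∈ Icc 1 n, Measurable[ℱ t] (g t)
  abs_le_one : ∀ t ∈ Icc 1 n, ∀ᵐ ω ∂μ, |g t ω| ≤ 1
  condExp_eq_zero : ∀ t ∈ Icc 1 n, μ[g t|ℱ (t - 1)] =ᵐ[μ] 0

structure IsPredictableIndicator (ℱ : Filtration ℕ m0) (n : ℕ) (w : ℕ → Ω → ℝ) : Prop where
  eq_zero_or_eq_one : ∀ t ∈ Icc 1 n, ∀ ω, w t ω = 0 ∨ w t ω = 1
  measurable : ∀ t ∈ Icc 1 n, Measurable[ℱ (t - 1)] (w t)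

lemma IsBoundedMartingaleDiff.neg {μ : Measure Ω} {ℱ : Filtration ℕ m0} {n : ℕ}
    {g : ℕ → Ω → ℝ} (hg : IsBoundedMartingaleDiff μ ℱ n g) :
    IsBoundedMartingaleDiff μ ℱ n (fun t => -g t) where
  measurable t ht := (hg.measurable t ht).neg
  abs_le_one t ht := by simpa using hg.abs_le_one t ht
  condExp_eq_zero t ht := by
    filter_upwards [condExp_neg (g t) (ℱ (t - 1)), hg.condExp_eq_zero t ht] with ω h h₀
    simp [h, h₀]

variable {μ : Measure Ω} {ℱ : Filtration ℕ m0} {n : ℕ} {g w : ℕ → Ω → ℝ}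

lemma measurable_azumaExponent (hg : ∀ t ∈ Icc 1 n, Measurable[ℱ t] (g t))
    (hw : ∀ t ∈ Icc 1 n, Measurable[ℱ (t - 1)] (w t)) (a : ℝ) {m : ℕ} (hm : m ≤ n) :
    Measurable[ℱ m] (azumaExponent a g w m) := by
  refine Finset.measurable_sum _ fun t ht => ?_
  obtain ⟨ht₁, htm⟩ := mem_Icc.1 ht
  have htn : t ∈ Icc 1 n := mem_Icc.2 ⟨ht₁, htm.trans hm⟩
  have hwt : Measurable[ℱ m] (w t) := (hw t htn).mono (ℱ.mono (by omega)) le_rfl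
  have hgt : Measurable[ℱ m] (g t) := (hg t htn).mono (ℱ.mono htm) le_rfl
  exact (measurable_const.mul (hwt.mul hgt)).sub (measurable_const.mul hwt)

lemma azumaExponent_le (hg : ∀ t ∈ Icc 1 n, ∀ᵐ ω ∂μ, |g t ω| ≤ 1)
    (hw : ∀ t ∈ Icc 1 n, ∀ ω, w t ω = 0 ∨ w t ω = 1) (a : ℝ) {m : ℕ} (hm : m ≤ n) :
    ∀ᵐ ω ∂μ, azumaExponent a g w m ω ≤ m * |a| := by
  filter_upwards [(Filter.eventually_all_finset (Icc 1 n)).2 hg] with ω hω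
  have hterm : ∀ t ∈ Icc 1 m, a * (w t ω * g t ω) - a ^ 2 / 2 * w t ω ≤ |a| := by
    intro t ht
    have htn : t ∈ Icc 1 n := mem_Icc.2 ⟨(mem_Icc.1 ht).1, (mem_Icc.1 ht).2.trans hm⟩
    have hax : a * g t ω ≤ |a| := by
      refine (le_abs_self _).trans ?_
      rw [abs_mul]
      exact mul_le_of_le_one_right (abs_nonneg a) (hω t htn)
    rcases hw t htn ω with h | h <;> simp only [h] <;> nlinarith [abs_nonneg a, sq_nonneg a]
  calc azumaExponent a g w m ω ≤ ∑ _t ∈ Icc 1 m, |a| := sum_le_sum hterm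
    _ = m * |a| := by simp

variable [IsFiniteMeasure μ]

lemma integrable_exp_azumaExponent (hg : IsBoundedMartingaleDiff μ ℱ n g)
    (hw : IsPredictableIndicator ℱ n w) (a : ℝ) {m : ℕ} (hm : m ≤ n) :
    Integrable (fun ω => Real.exp (azumaExponent a g w m ω)) μ := by
  refine (integrable_const (Real.exp (m * |a|))).mono' ?_ ?_
  · exact (Real.measurable_exp.comp ((measurable_azumaExponent hg.measurable hw.measurable a hm).mono
      (ℱ.le m) le_rfl)).aestronglyMeasurable
  · filter_upwards [azumaExponent_le hg.abs_le_one hw.eq_zero_or_eq_one a hm] with ω hω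
    simpa [Real.norm_eq_abs] using hω

lemma integral_exp_azumaExponent_succ_le (hg : IsBoundedMartingaleDiff μ ℱ n g)
    (hw : IsPredictableIndicator ℱ n w) (a : ℝ) {m : ℕ} (hm : m + 1 ≤ n) :
    ∫ ω, Real.exp (azumaExponent a g w (m + 1) ω) ∂μ ≤
      ∫ ω, Real.exp (azumaExponent a g w m ω) ∂μ := by
  have ht : m + 1 ∈ Icc 1 n := mem_Icc.2 ⟨by omega, hm⟩
  set c := Real.exp (-(a ^ 2 / 2)) * Real.sinh a
  set X : Ω → ℝ := fun ω => Real.exp (azumaExponent a g w m ω) * w (m + 1) ω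
  have hw_meas : Measurable[ℱ m] (w (m + 1)) := by simpa using hw.measurable _ ht
  have hg_meas : Measurable (g (m + 1)) := (hg.measurable _ ht).mono (ℱ.le _) le_rfl
  have hw_le : ∀ ω, ‖w (m + 1) ω‖ ≤ 1 := fun ω => by
    rcases hw.eq_zero_or_eq_one _ ht ω with h | h <;> simp [h]
  have hg_le : ∀ᵐ ω ∂μ, ‖g (m + 1) ω‖ ≤ 1 := hg.abs_le_one _ ht
  have hX_meas : StronglyMeasurable[ℱ m] X :=
    ((Real.measurable_exp.comp (measurable_azumaExponent hg.measurable hw.measurable a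
      (by omega))).mul hw_meas).stronglyMeasurable
  have hX_int : Integrable X μ :=
    (integrable_exp_azumaExponent hg hw a (by omega)).mul_bdd
      (hw_meas.mono (ℱ.le m) le_rfl).aestronglyMeasurable (ae_of_all _ hw_le)
  have hXg_int : Integrable (fun ω => X ω * g (m + 1) ω) μ :=
    hX_int.mul_bdd hg_meas.aestronglyMeasurable hg_le
  have hXg : ∫ ω, X ω * g (m + 1) ω ∂μ = 0 :=
    integral_mul_eq_zero_of_condExp_eq_zero (ℱ.le m) hX_meas hXg_int
      ((integrable_const 1).mono' hg_meas.aestronglyMeasurable hg_le)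
      (by simpa using hg.condExp_eq_zero _ ht)
  have hstep : ∀ᵐ ω ∂μ, Real.exp (azumaExponent a g w (m + 1) ω) ≤
      Real.exp (azumaExponent a g w m ω) + c * (X ω * g (m + 1) ω) := by
    filter_upwards [hg.abs_le_one _ ht] with ω hω
    exact exp_azumaExponent_succ_le a m (hw.eq_zero_or_eq_one _ ht ω) hω
  calc ∫ ω, Real.exp (azumaExponent a g w (m + 1) ω) ∂μ
      ≤ ∫ ω, (Real.exp (azumaExponent a g w m ω) + c * (X ω * g (m + 1) ω)) ∂μ :=
        integral_mono_ae (integrable_exp_azumaExponent hg hw a hm)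
          ((integrable_exp_azumaExponent hg hw a (by omega)).add (hXg_int.const_mul c)) hstep
    _ = ∫ ω, Real.exp (azumaExponent a g w m ω) ∂μ := by
        rw [integral_add (integrable_exp_azumaExponent hg hw a (by omega))
          (hXg_int.const_mul c), integral_const_mul, hXg, mul_zero, add_zero]

variable [IsProbabilityMeasure μ]

lemma integral_exp_azumaExponent_le_one (hg : IsBoundedMartingaleDiff μ ℱ n g)
    (hw : IsPredictableIndicator ℱ n w) (a : ℝ) {m : ℕ} (hm : m ≤ n) :
    ∫ ω, Real.exp (azumaExponent a g w m ω) ∂μ ≤ 1 := by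
  induction m with
  | zero => simp [azumaExponent]
  | succ m ih => exact (integral_exp_azumaExponent_succ_le hg hw a hm).trans (ih (by omega))

lemma measure_sum_eq_inter_lt_sum_mul_le (hg : IsBoundedMartingaleDiff μ ℱ n g)
    (hw : IsPredictableIndicator ℱ n w) {α : ℝ} (hα : 0 ≤ α) (i : ℕ) :
    μ ({ω | ∑ t ∈ Icc 1 n, w t ω = (i : ℝ)} ∩
       {ω | α * (i : ℝ) < ∑ t ∈ Icc 1 n, w t ω * g t ω}) ≤
      ENNReal.ofReal (Real.exp (-(i : ℝ) * α ^ 2 / 2)) := by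
  set ε : ℝ := i * α ^ 2 / 2
  have hsub : {ω | ∑ t ∈ Icc 1 n, w t ω = (i : ℝ)} ∩
      {ω | α * (i : ℝ) < ∑ t ∈ Icc 1 n, w t ω * g t ω} ⊆
        {ω | ε ≤ azumaExponent α g w n ω} := by
    rintro ω ⟨hcount, hsum⟩
    rw [Set.mem_ofPred_eq] at hcount hsum
    have hexp : azumaExponent α g w n ω =
        α * ∑ t ∈ Icc 1 n, w t ω * g t ω - α ^ 2 / 2 * ∑ t ∈ Icc 1 n, w t ω := by
      simp only [azumaExponent, mul_sum, sum_sub_distrib]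
    have := mul_le_mul_of_nonneg_left hsum.le hα
    simp only [Set.mem_ofPred_eq, hexp, hcount, ε]
    nlinarith
  have hchernoff := ProbabilityTheory.measure_ge_le_exp_mul_mgf ε zero_le_one
    (by simpa using integrable_exp_azumaExponent hg hw α le_rfl)
  have hmgf : ProbabilityTheory.mgf (azumaExponent α g w n) μ 1 ≤ 1 := by
    simpa [ProbabilityTheory.mgf] using integral_exp_azumaExponent_le_one hg hw α le_rfl
  refine (measure_mono hsub).trans ?_
  rw [← ofReal_measureReal]
  refine ENNReal.ofReal_le_ofReal (hchernoff.trans ?_)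
  calc Real.exp (-1 * ε) * ProbabilityTheory.mgf (azumaExponent α g w n) μ 1
      ≤ Real.exp (-1 * ε) := mul_le_of_le_one_right (Real.exp_pos _).le hmgf
    _ = Real.exp (-(i : ℝ) * α ^ 2 / 2) := by congr 1; ring

end WeightedAzuma

theorem weighted_azuma_fixed_count_general
    {Ω : Type*} [m0 : MeasurableSpace Ω] (μ : Measure Ω) [IsProbabilityMeasure μ]
    (ℱ : Filtration ℕ m0) (n : ℕ) (g w : ℕ → Ω → ℝ)
    (hgmeas : ∀ t ∈ Icc 1 n, Measurable[ℱ t] (g t))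
    (hgbdd : ∀ t ∈ Icc 1 n, ∀ᵐ ω ∂μ, |g t ω| ≤ 1)
    (hgmart : ∀ t ∈ Icc 1 n, μ[g t|ℱ (t - 1)] =ᵐ[μ] 0)
    (hw01 : ∀ t ∈ Icc 1 n, ∀ ω, w t ω = 0 ∨ w t ω = 1)
    (hwmeas : ∀ t ∈ Icc 1 n, Measurable[ℱ (t - 1)] (w t))
    (α : ℝ) (hα : 0 < α) (i : ℕ) :
    μ ({ω | ∑ t ∈ Icc 1 n, w t ω = (i : ℝ)} ∩
       {ω | α * (i : ℝ) < |∑ t ∈ Icc 1 n, w t ω * g t ω|}) ≤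
      ENNReal.ofReal (2 * Real.exp (-(i : ℝ) * α ^ 2 / 2)) := by
  have hg : IsBoundedMartingaleDiff μ ℱ n g := ⟨hgmeas, hgbdd, hgmart⟩
  have hw : IsPredictableIndicator ℱ n w := ⟨hw01, hwmeas⟩
  set A := {ω | ∑ t ∈ Icc 1 n, w t ω = (i : ℝ)}
  have hsplit : A ∩ {ω | α * i < |∑ t ∈ Icc 1 n, w t ω * g t ω|} ⊆
      (A ∩ {ω | α * i < ∑ t ∈ Icc 1 n, w t ω * g t ω}) ∪
        (A ∩ {ω | α * i < ∑ t ∈ Icc 1 n, w t ω * (fun t => -g t) t ω}) := by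
    rintro ω ⟨hωA, hω⟩
    rw [Set.mem_ofPred_eq] at hω
    rcases lt_abs.1 hω with h | h
    · exact Or.inl ⟨hωA, h⟩
    · exact Or.inr ⟨hωA, by simpa [mul_neg, sum_neg_distrib] using h⟩
  calc _ ≤ _ := (measure_mono hsplit).trans (measure_union_le _ _)
    _ ≤ ENNReal.ofReal (Real.exp (-(i : ℝ) * α ^ 2 / 2)) +
          ENNReal.ofReal (Real.exp (-(i : ℝ) * α ^ 2 / 2)) :=
        add_le_add (measure_sum_eq_inter_lt_sum_mul_le hg hw hα.le i)
          (measure_sum_eq_inter_lt_sum_mul_le hg.neg hw hα.le i)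
    _ = ENNReal.ofReal (2 * Real.exp (-(i : ℝ) * α ^ 2 / 2)) := by
        rw [← ENNReal.ofReal_add (Real.exp_pos _).le (Real.exp_pos _).le, two_mul]

/-- Weighted Azuma–Hoeffding-type inequality: for a bounded martingale difference
sequence `g` and a predictable `{0,1}`-valued weight sequence `w`, the weighted sum
concentrates on the event that exactly `i` weights are active. -/
theorem weighted_azuma_fixed_count
    {Ω : Type*} [m0 : MeasurableSpace Ω] (μ : Measure Ω) [IsProbabilityMeasure μ]
    (ℱ : Filtration ℕ m0) (n : ℕ) (g w : ℕ → Ω → ℝ)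
    (hgmeas : ∀ t ∈ Icc 1 n, Measurable[ℱ t] (g t))
    (hgbdd : ∀ t ∈ Icc 1 n, ∀ᵐ ω ∂μ, |g t ω| ≤ 1)
    (hgmart : ∀ t ∈ Icc 1 n, μ[g t|ℱ (t - 1)] =ᵐ[μ] 0)
    (hw01 : ∀ t ∈ Icc 1 n, ∀ ω, w t ω = 0 ∨ w t ω = 1)
    (hwmeas : ∀ t ∈ Icc 1 n, Measurable[ℱ (t - 1)] (w t))
    (α : ℝ) (hα : 0 < α) (i : ℕ) (hi : 1 ≤ i) :
    μ ({ω | ∑ t ∈ Icc 1 n, w t ω = (i : ℝ)} ∩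
       {ω | α * (i : ℝ) < |∑ t ∈ Icc 1 n, w t ω * g t ω|}) ≤
      ENNReal.ofReal (2 * Real.exp (-(i : ℝ) * α ^ 2 / 2)) :=
  weighted_azuma_fixed_count_general (m0 := m0) μ ℱ n g w hgmeas hgbdd hgmart hw01 hwmeas α hα i
end
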